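/- Let N be a d-dimensional real normed space, let k ∈ ℕ with k ≥ 1, and let θ ∈ ℕ be such that every finite set S ⊆ B(o,2) with o ∈ S and pairwise distances at least 1 satisfies |S| ≤ θ. Let c₁, …, c_m be distinct points of N with m ≥ 2 (and m ≥ k + 1 so that the radii are defined), and for each i let r_i be the smallest r ≥ 0 such that {j : j ≠ i, ‖c_i − c_j‖ ≤ r} has at least k elements. Let G be the graph on {1, …, m} joining i and j whenever the closed balls B(c_i, r_i) and B(c_j, r_j) intersect. Then there exist at least two distinct vertices of G whose degree is less than θ·k. -/

import Mathlib

/-!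
Take a vertex `i` of radius `R = rᵢ` such that at most one other vertex has a smaller radius;
the two vertices of smallest radius are such. Fewer than `k` neighbours of `i` lie in the open
ball `B(cᵢ, R)`. The remaining neighbours `j` satisfy `R ≤ ‖cⱼ - cᵢ‖ ≤ R + rⱼ`; greedily by
decreasing radius they are covered by the open influence balls of a subfamily `P` whose centres
are pairwise at distance at least the larger of their radii (hence at least `R`), and as each
open influence ball holds at most `k` centres there are at most `k·|P|` of them.
Retracting the points `cₚ - cᵢ` radially onto `B(o, 2R)` and scaling by `R⁻¹` gives, together
with `o`, a `1`-separated subset of `B(o, 2)`, so `|P| + 1 ≤ θ` and the degree of `i` is less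
than `k + k·|P| ≤ θk`.
-/

open Finset

section RadialRetraction

variable {N : Type*} [NormedAddCommGroup N] [NormedSpace ℝ N]

noncomputable def radialRetraction (ρ : ℝ) (v : N) : N :=
  if ‖v‖ ≤ ρ then v else (ρ / ‖v‖) • v

lemma radialRetraction_of_norm_le {ρ : ℝ} {v : N} (h : ‖v‖ ≤ ρ) : radialRetraction ρ v = v :=
  if_pos h

lemma radialRetraction_of_lt_norm {ρ : ℝ} {v : N} (h : ρ < ‖v‖) :
    radialRetraction ρ v = (ρ / ‖v‖) • v :=
  if_neg h.not_ge

lemma norm_radialRetraction {ρ : ℝ} (hρ : 0 ≤ ρ) (v : N) :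
    ‖radialRetraction ρ v‖ = min ‖v‖ ρ := by
  rcases le_or_gt ‖v‖ ρ with h | h
  · rw [radialRetraction_of_norm_le h, min_eq_left h]
  · have hv : 0 < ‖v‖ := hρ.trans_lt h
    rw [radialRetraction_of_lt_norm h, norm_smul, Real.norm_of_nonneg (by positivity),
      div_mul_cancel₀ _ hv.ne', min_eq_right h.le]

lemma norm_sub_smul_div_norm {t : ℝ} {v : N} (ht : 0 ≤ t) (h : t ≤ ‖v‖) :
    ‖v - (t / ‖v‖) • v‖ = ‖v‖ - t := by
  rcases (norm_nonneg v).eq_or_lt with hv | hv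
  · obtain rfl : t = 0 := le_antisymm (hv ▸ h) ht
    simp
  calc ‖v - (t / ‖v‖) • v‖ = ‖(1 - t / ‖v‖) • v‖ := by rw [sub_smul, one_smul]
    _ = (1 - t / ‖v‖) * ‖v‖ := by
      rw [norm_smul, Real.norm_of_nonneg (sub_nonneg.2 ((div_le_one hv).2 h))]
    _ = ‖v‖ - t := by field_simp

lemma norm_sub_radialRetraction {ρ : ℝ} {v : N} (hρ : 0 ≤ ρ) (h : ρ < ‖v‖) :
    ‖v - radialRetraction ρ v‖ = ‖v‖ - ρ := by
  rw [radialRetraction_of_lt_norm h, norm_sub_smul_div_norm hρ h.le]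

lemma le_norm_radialRetraction_sub {s : ℝ} (hs : 0 < s) {x y : N} (hxy : s ≤ ‖x - y‖)
    (hx : ‖x‖ ≤ s + ‖x - y‖) (hy : ‖y‖ ≤ s + ‖x - y‖) :
    s ≤ ‖radialRetraction (2 * s) x - radialRetraction (2 * s) y‖ := by
  wlog hyx : ‖y‖ ≤ ‖x‖ generalizing x y
  · rw [norm_sub_rev] at hxy hx hy ⊢
    exact this hxy hy hx (le_of_not_ge hyx)
  rcases le_or_gt ‖x‖ (2 * s) with hx2 | hx2
  · rwa [radialRetraction_of_norm_le hx2, radialRetraction_of_norm_le (hyx.trans hx2)]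
  rcases le_or_gt ‖y‖ (2 * s) with hy2 | hy2
  · rw [radialRetraction_of_norm_le hy2]
    have hxu := norm_sub_radialRetraction (by positivity) hx2
    have htri := norm_sub_le_norm_sub_add_norm_sub x (radialRetraction (2 * s) x) y
    linarith
  -- `a` is the point of norm `‖y‖` on the ray through `x`
  have hy0 : 0 < ‖y‖ := by linarith
  set a := (‖y‖ / ‖x‖) • x
  have hxa : ‖x - a‖ = ‖x‖ - ‖y‖ := norm_sub_smul_div_norm hy0.le hyx
  have hay : ‖a - y‖ = ‖y‖ / (2 * s) *
      ‖radialRetraction (2 * s) x - radialRetraction (2 * s) y‖ := by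
    rw [radialRetraction_of_lt_norm hx2, radialRetraction_of_lt_norm hy2, ← Real.norm_of_nonneg
      (by positivity : 0 ≤ ‖y‖ / (2 * s)), ← norm_smul, smul_sub, smul_smul, smul_smul,
      div_mul_div_cancel₀ (by positivity), div_mul_div_cancel₀ (by positivity), div_self hy0.ne',
      one_smul]
  have htri := norm_sub_le_norm_sub_add_norm_sub x a y
  have key : ‖y‖ / (2 * s) * s ≤ ‖y‖ / (2 * s) *
      ‖radialRetraction (2 * s) x - radialRetraction (2 * s) y‖ := by
    rw [show ‖y‖ / (2 * s) * s = ‖y‖ / 2 by field_simp]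
    linarith
  exact le_of_mul_le_mul_left key (by positivity)

end RadialRetraction

/-- `θ` bounds `ϑ(N)`. -/
def IsPackingBound (N : Type*) [NormedAddCommGroup N] (θ : ℕ) : Prop :=
  ∀ S : Finset N, (∀ x ∈ S, ‖x‖ ≤ 2) → (0 : N) ∈ S →
    (∀ x ∈ S, ∀ y ∈ S, x ≠ y → 1 ≤ ‖x - y‖) → S.card ≤ θ

section Packing

variable {N : Type*} [NormedAddCommGroup N] {θ : ℕ}

lemma IsPackingBound.card_add_one_le (hθ : IsPackingBound N θ) {A : Finset N}
    (h1 : ∀ x ∈ A, 1 ≤ ‖x‖) (h2 : ∀ x ∈ A, ‖x‖ ≤ 2)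
    (hsep : ∀ x ∈ A, ∀ y ∈ A, x ≠ y → 1 ≤ ‖x - y‖) :
    #A + 1 ≤ θ := by
  classical
  have h0 : (0 : N) ∉ A := fun h => by
    have := h1 0 h
    norm_num at this
  rw [← card_insert_of_notMem h0]
  refine hθ _ ?_ (mem_insert_self _ _) ?_
  · simpa [forall_mem_insert] using h2
  · intro x hx y hy hxy
    rcases mem_insert.1 hx with rfl | hx <;> rcases mem_insert.1 hy with rfl | hy
    · exact absurd rfl hxy
    · simpa using h1 y hy
    · simpa using h1 x hx
    · exact hsep x hx y hy hxy

lemma IsPackingBound.card_add_one_le_of_sep [NormedSpace ℝ N] (hθ : IsPackingBound N θ)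
    {ι : Type*} {x : ι → N} {P : Finset ι} {R : ℝ} (hR : 0 < R) (hnorm : ∀ p ∈ P, R ≤ ‖x p‖)
    (hsep : ∀ p ∈ P, ∀ q ∈ P, p ≠ q → R ≤ ‖x p - x q‖ ∧ ‖x p‖ ≤ R + ‖x p - x q‖) :
    #P + 1 ≤ θ := by
  classical
  set ψ : ι → N := fun p => R⁻¹ • radialRetraction (2 * R) (x p)
  have hψsep : ∀ p ∈ P, ∀ q ∈ P, p ≠ q → 1 ≤ ‖ψ p - ψ q‖ := by
    intro p hp q hq hpq
    obtain ⟨hpq₁, hpq₂⟩ := hsep p hp q hq hpq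
    obtain ⟨-, hqp₂⟩ := hsep q hq p hp hpq.symm
    rw [norm_sub_rev] at hqp₂
    have := le_norm_radialRetraction_sub hR hpq₁ hpq₂ hqp₂
    rw [← smul_sub, norm_smul, norm_inv, Real.norm_of_nonneg hR.le, le_inv_mul_iff₀ hR, mul_one]
    exact this
  have hψnorm : ∀ p, ‖ψ p‖ = R⁻¹ * min ‖x p‖ (2 * R) := fun p => by
    rw [norm_smul, norm_inv, Real.norm_of_nonneg hR.le, norm_radialRetraction (by positivity)]
  have hinj : Set.InjOn ψ P := fun p hp q hq hψ => by
    by_contra hpq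
    have := hψsep p hp q hq hpq
    rw [hψ, sub_self, norm_zero] at this
    linarith
  rw [← card_image_of_injOn hinj]
  refine hθ.card_add_one_le ?_ ?_ ?_
  · intro y hy
    obtain ⟨p, hp, rfl⟩ := mem_image.1 hy
    rw [hψnorm, le_inv_mul_iff₀ hR, mul_one]
    exact le_min (hnorm p hp) (by linarith)
  · intro y hy
    obtain ⟨p, hp, rfl⟩ := mem_image.1 hy
    rw [hψnorm, inv_mul_le_iff₀ hR, mul_comm]
    exact min_le_right _ _
  · simp only [mem_image]
    rintro _ ⟨p, hp, rfl⟩ _ ⟨q, hq, rfl⟩ hpq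
    exact hψsep p hp q hq (ne_of_apply_ne ψ hpq)

end Packing

section Influence

variable {ι X : Type*}

lemma exists_separated_subset_covering [PseudoMetricSpace X] (c : ι → X) (r : ι → ℝ) (A : Finset ι)
    (hr : ∀ a ∈ A, 0 < r a) :
    ∃ P ⊆ A, (∀ p ∈ P, ∀ q ∈ P, p ≠ q → max (r p) (r q) ≤ dist (c p) (c q)) ∧
      ∀ a ∈ A, ∃ p ∈ P, dist (c p) (c a) < r p := by
  classical
  induction A using Finset.strongInduction with
  | H A ih =>
  rcases A.eq_empty_or_nonempty with rfl | hA
  · exact ⟨∅, empty_subset _, by simp, by simp⟩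
  -- take a largest radius, discard what its open ball covers, and recurse
  obtain ⟨p, hpA, hpmax⟩ := A.exists_max_image r hA
  set A' := A.filter fun a => r p ≤ dist (c p) (c a)
  have hpA' : p ∉ A' := by simp [A', hr p hpA]
  obtain ⟨P', hP'A', hP'sep, hP'cov⟩ :=
    ih A' (ssubset_of_subset_of_ne (filter_subset _ _) fun h => hpA' (h ▸ hpA))
      fun a ha => hr a (mem_of_mem_filter a ha)
  have hfar : ∀ q ∈ P', max (r p) (r q) ≤ dist (c p) (c q) := fun q hq => by
    have hq' := mem_filter.1 (hP'A' hq)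
    exact max_le hq'.2 ((hpmax q hq'.1).trans hq'.2)
  refine ⟨insert p P', insert_subset hpA (hP'A'.trans (filter_subset _ _)), ?_, ?_⟩
  · intro a ha b hb hab
    rcases mem_insert.1 ha with rfl | ha' <;> rcases mem_insert.1 hb with rfl | hb'
    · exact absurd rfl hab
    · exact hfar b hb'
    · rw [max_comm, dist_comm]
      exact hfar a ha'
    · exact hP'sep a ha' b hb' hab
  · intro a ha
    by_cases hpa : dist (c p) (c a) < r p
    · exact ⟨p, mem_insert_self _ _, hpa⟩
    · obtain ⟨q, hq, hqa⟩ := hP'cov a (mem_filter.2 ⟨ha, le_of_not_gt hpa⟩)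
      exact ⟨q, mem_insert_of_mem hq, hqa⟩

variable {c : ι → X} {k : ℕ} {i : ι} {ρ : ℝ}

lemma influenceRadius_pos [MetricSpace X] (hk : 1 ≤ k) (hc : Function.Injective c)
    (hρ : IsLeast {ρ : ℝ | 0 ≤ ρ ∧ k ≤ {j | j ≠ i ∧ dist (c i) (c j) ≤ ρ}.ncard} ρ) : 0 < ρ := by
  obtain ⟨hρ0, hρk⟩ := hρ.1
  refine hρ0.lt_of_ne fun h => ?_
  have : {j | j ≠ i ∧ dist (c i) (c j) ≤ ρ} = ∅ := by
    ext j
    simp only [Set.mem_ofPred_eq, Set.mem_empty_iff_false, iff_false, not_and, not_le, ← h]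
    exact fun hji => dist_pos.2 (hc.ne hji.symm)
  rw [this, Set.ncard_empty] at hρk
  omega

lemma card_lt_of_isLeast_influenceRadius [PseudoMetricSpace X] [Fintype ι] [DecidableEq ι]
    (hk : 1 ≤ k)
    (hρ : IsLeast {ρ : ℝ | 0 ≤ ρ ∧ k ≤ {j | j ≠ i ∧ dist (c i) (c j) ≤ ρ}.ncard} ρ) :
    #{j | j ≠ i ∧ dist (c i) (c j) < ρ} < k := by
  set S : Finset ι := {j | j ≠ i ∧ dist (c i) (c j) < ρ}
  by_contra! hS
  have hSne : S.Nonempty := card_pos.1 (by omega)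
  -- the largest distance to a point of `S` would be a smaller admissible radius
  set ρ' := S.sup' hSne fun j => dist (c i) (c j)
  have hρ' : ρ' < ρ := (sup'_lt_iff hSne).2 fun j hj => (mem_filter.1 hj).2.2
  refine hρ'.not_ge (hρ.2 ⟨?_, ?_⟩)
  · exact dist_nonneg.trans (le_sup' (fun j => dist (c i) (c j)) hSne.choose_spec)
  · rw [Set.ncard_eq_toFinset_card', Set.toFinset_ofPred]
    refine hS.trans (card_le_card fun j hj => ?_)
    exact mem_filter.2 ⟨mem_univ j, (mem_filter.1 hj).2.1, le_sup' (fun j => dist (c i) (c j)) hj⟩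

lemma card_filter_dist_lt_le [PseudoMetricSpace X] [Fintype ι] [DecidableEq ι]
    (h : #{j | j ≠ i ∧ dist (c i) (c j) < ρ} < k) : #{j | dist (c i) (c j) < ρ} ≤ k := by
  have hsub : ({j | dist (c i) (c j) < ρ} : Finset ι) ⊆
      insert i ({j | j ≠ i ∧ dist (c i) (c j) < ρ} : Finset ι) := fun j hj => by
    by_cases hji : j = i
    · exact hji ▸ mem_insert_self _ _
    · exact mem_insert_of_mem (mem_filter.2 ⟨mem_univ j, hji, (mem_filter.1 hj).2⟩)
  have := (card_le_card hsub).trans (card_insert_le _ _)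
  omega

end Influence

lemma exists_ne_forall_le_max {ι α : Type*} [Finite ι] [Nontrivial ι] [LinearOrder α]
    (f : ι → α) :
    ∃ a b, a ≠ b ∧ (∀ j l, j ≠ l → f a ≤ max (f j) (f l)) ∧
      ∀ j l, j ≠ l → f b ≤ max (f j) (f l) := by
  classical
  have := Fintype.ofFinite ι
  obtain ⟨a, ha⟩ := Finite.exists_min f
  obtain ⟨b, hb, hbmin⟩ := (univ.erase a).exists_min_image f
    (let ⟨b, hb⟩ := exists_ne a; ⟨b, mem_erase.2 ⟨hb, mem_univ b⟩⟩)
  refine ⟨a, b, (ne_of_mem_erase hb).symm, fun j l _ => (ha j).trans (le_max_left _ _),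
    fun j l hjl => ?_⟩
  by_cases hj : j = a
  · exact (hbmin l (mem_erase.2 ⟨fun h => hjl (hj.trans h.symm), mem_univ l⟩)).trans
      (le_max_right _ _)
  · exact (hbmin j (mem_erase.2 ⟨hj, mem_univ j⟩)).trans (le_max_left _ _)

lemma degree_lt_mul_of_isPackingBound {ι N : Type*} [Fintype ι] [DecidableEq ι]
    [NormedAddCommGroup N] [NormedSpace ℝ N] {θ k : ℕ} (hθ : IsPackingBound N θ)
    {c : ι → N} {r : ι → ℝ} {G : SimpleGraph ι} [DecidableRel G.Adj] (hr : ∀ j, 0 < r j)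
    (hopen : ∀ j, #{l | l ≠ j ∧ dist (c j) (c l) < r j} < k)
    (hadj : ∀ j l, G.Adj j l → dist (c j) (c l) ≤ r j + r l) {i : ι}
    (hi : ∀ j l, j ≠ l → r i ≤ max (r j) (r l)) :
    G.degree i < k * θ := by
  set near := (G.neighborFinset i).filter fun j => dist (c i) (c j) < r i
  set far := (G.neighborFinset i).filter fun j => ¬dist (c i) (c j) < r i
  have hnear : #near < k := by
    refine (card_le_card fun j hj => ?_).trans_lt (hopen i)
    obtain ⟨hj, hij⟩ := mem_filter.1 hj
    exact mem_filter.2 ⟨mem_univ j, ((G.mem_neighborFinset i j).1 hj).ne', hij⟩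
  obtain ⟨P, hPfar, hPsep, hPcov⟩ := exists_separated_subset_covering c r far fun j _ => hr j
  have hfar : #far ≤ #P * k := by
    refine (card_le_card fun a ha => ?_).trans
      (card_biUnion_le_card_mul P (fun p => {l | dist (c p) (c l) < r p}) k fun p _ => ?_)
    · obtain ⟨p, hp, hpa⟩ := hPcov a ha
      exact mem_biUnion.2 ⟨p, hp, mem_filter.2 ⟨mem_univ a, hpa⟩⟩
    · exact card_filter_dist_lt_le (hopen p)
  have hP : #P + 1 ≤ θ := by
    refine hθ.card_add_one_le_of_sep (x := fun p => c p - c i) (hr i) (fun p hp => ?_) ?_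
    · rw [← dist_eq_norm, dist_comm]
      exact le_of_not_gt (mem_filter.1 (hPfar hp)).2
    · intro p hp q hq hpq
      simp only [sub_sub_sub_cancel_right, ← dist_eq_norm]
      have hmax := hPsep p hp q hq hpq
      have hip := hadj i p ((G.mem_neighborFinset i p).1 (mem_filter.1 (hPfar hp)).1)
      rw [dist_comm] at hip
      exact ⟨(hi p q hpq).trans hmax, hip.trans (by linarith [le_max_left (r p) (r q)])⟩
  have hsplit : #near + #far = G.degree i := by
    rw [← G.card_neighborFinset_eq_degree]
    exact card_filter_add_card_filter_not _
  calc G.degree i = #near + #far := hsplit.symm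
    _ < k + #P * k := by omega
    _ = k * (#P + 1) := by ring
    _ ≤ k * θ := Nat.mul_le_mul_left k hP

theorem kth_soig_two_small_degrees_general {N : Type*} [NormedAddCommGroup N] [NormedSpace ℝ N]
    (k : ℕ) (hk : 1 ≤ k)
    (θ : ℕ)
    (hθ : ∀ S : Finset N, (∀ x ∈ S, ‖x‖ ≤ 2) → (0 : N) ∈ S →
      (∀ x ∈ S, ∀ y ∈ S, x ≠ y → 1 ≤ ‖x - y‖) → S.card ≤ θ)
    (m : ℕ) (hm2 : 2 ≤ m)
    (c : Fin m → N) (hc : Function.Injective c)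
    (r : Fin m → ℝ)
    (hr : ∀ i : Fin m,
      IsLeast {ρ : ℝ | 0 ≤ ρ ∧ k ≤ {j : Fin m | j ≠ i ∧ ‖c i - c j‖ ≤ ρ}.ncard} (r i))
    (G : SimpleGraph (Fin m))
    (hG : ∀ i j : Fin m, G.Adj i j ↔
      i ≠ j ∧ (Metric.closedBall (c i) (r i) ∩ Metric.closedBall (c j) (r j)).Nonempty) :
    ∃ i j : Fin m, i ≠ j ∧
      (G.neighborSet i).ncard < θ * k ∧ (G.neighborSet j).ncard < θ * k := by
  classical
  have hr' : ∀ i,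
      IsLeast {ρ : ℝ | 0 ≤ ρ ∧ k ≤ {j | j ≠ i ∧ dist (c i) (c j) ≤ ρ}.ncard} (r i) := by
    simpa only [dist_eq_norm] using hr
  have hdeg : ∀ i, (∀ j l, j ≠ l → r i ≤ max (r j) (r l)) →
      (G.neighborSet i).ncard < θ * k := fun i hi => by
    rw [← Nat.card_coe_set_eq, Nat.card_eq_fintype_card, G.card_neighborSet_eq_degree,
      mul_comm]
    exact degree_lt_mul_of_isPackingBound hθ (fun j => influenceRadius_pos hk hc (hr' j))
      (fun j => card_lt_of_isLeast_influenceRadius hk (hr' j))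
      (fun j l h => Metric.dist_le_add_of_nonempty_closedBall_inter_closedBall ((hG j l).1 h).2) hi
  have : Nontrivial (Fin m) := Fin.nontrivial_iff_two_le.2 hm2
  obtain ⟨a, b, hab, ha, hb⟩ := exists_ne_forall_le_max r
  exact ⟨a, b, hab, hdeg a ha, hdeg b hb⟩

/-- Every `k`-th closed sphere-of-influence graph on at least two points has at
least two vertices of degree less than `ϑ(N)·k`. -/
theorem kth_soig_two_small_degrees {N : Type*} [NormedAddCommGroup N] [NormedSpace ℝ N]
    [FiniteDimensional ℝ N] (d : ℕ) (hdim : Module.finrank ℝ N = d)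
    (k : ℕ) (hk : 1 ≤ k)
    (θ : ℕ)
    (hθ : ∀ S : Finset N, (∀ x ∈ S, ‖x‖ ≤ 2) → (0 : N) ∈ S →
      (∀ x ∈ S, ∀ y ∈ S, x ≠ y → 1 ≤ ‖x - y‖) → S.card ≤ θ)
    (m : ℕ) (hm2 : 2 ≤ m) (hmk : k + 1 ≤ m)
    (c : Fin m → N) (hc : Function.Injective c)
    (r : Fin m → ℝ)
    (hr : ∀ i : Fin m,
      IsLeast {ρ : ℝ | 0 ≤ ρ ∧ k ≤ {j : Fin m | j ≠ i ∧ ‖c i - c j‖ ≤ ρ}.ncard} (r i))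
    (G : SimpleGraph (Fin m))
    (hG : ∀ i j : Fin m, G.Adj i j ↔
      i ≠ j ∧ (Metric.closedBall (c i) (r i) ∩ Metric.closedBall (c j) (r j)).Nonempty) :
    ∃ i j : Fin m, i ≠ j ∧
      (G.neighborSet i).ncard < θ * k ∧ (G.neighborSet j).ncard < θ * k :=
  kth_soig_two_small_degrees_general k hk θ hθ m hm2 c hc r hr G hG
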